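/- If, at stage l of the interleaving algorithm, the flag P is true with finite-fundamental string S and remains true at all subsequent stages, then the tail of the output sequence from block B_l onward is periodic with period |S| and the output sequence is eventually periodic. -/
import Mathlib


/-- the n-th triangular number -/
def tri (n : ℕ) : ℕ := n * (n + 1) / 2

/-- the diagonal index sequence `1, 2, 1, 2, 3, 1, 2, 3, 4, …` (for `k ≥ 1`):
`idx k = k − tri n + 1` for the unique `n` with `tri n ≤ k < tri (n+1)`. -/
def idx (k : ℕ) : ℕ := k - tri ((Nat.sqrt (8 * k + 1) - 1) / 2) + 1

/-- the minimal (finite) period of a list, if it has one -/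
def listPeriod? {X : Type*} [DecidableEq X] (L : List X) : Option ℕ :=
  (List.range L.length).find? fun k =>
    decide (0 < k) && (L.drop k == L.take (L.length - k))

/-- the block of length `n` following the cyclic repetition of the pattern `S`,
starting at phase `ph` -/
def patternBlock {X : Type*} (S : List X) (d : X) (ph n : ℕ) : List X :=
  (List.range n).map fun j => S.getD ((ph + j) % S.length) d

/-- the state of the sequence interleaving algorithm: `k` is the pointer into the
diagonal index sequence, `used i` is the number of terms already removed from input
sequence `i`, and `flag` is `some (S, ph)` when the Boolean flag `P` is true with
current finite-fundamental string `S` and phase `ph`, and `none` when `P` is false. -/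
structure IState (X : Type*) where
  k : ℕ
  used : ℕ → ℕ
  flag : Option (List X × ℕ)

/-- one stage of the sequence interleaving algorithm: from state `s`, form block `B_l`
by removing `2^l` terms from the beginning of the unused part of input sequence
`idx s.k`, then check/update the periodicity flag, incrementing `k` exactly when the
flag ends up false.  Returns the new state together with the block produced. -/
def step {X : Type*} [DecidableEq X] (a : ℕ → ℕ → X) (s : IState X) (l : ℕ) :
    IState X × List X :=
  let i := idx s.k
  let B := (List.range (2 ^ l)).map fun j => a i (s.used i + 1 + j)
  let used' := fun i' => if i' = i then s.used i + 2 ^ l else s.used i'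
  match s.flag with
  | none =>
    match listPeriod? B with
    | some p => (⟨s.k, used', some (B.take p, 2 ^ l % p)⟩, B)
    | none => (⟨s.k + 1, used', none⟩, B)
  | some (S, ph) =>
    if B = patternBlock S (a 1 1) ph (2 ^ l) then
      (⟨s.k, used', some (S, (ph + 2 ^ l) % S.length)⟩, B)
    else (⟨s.k + 1, used', none⟩, B)

/-- `run a l` is the state of the interleaving algorithm after producing blocks
`B_1, …, B_l`, starting from `k = 1`, nothing used, and flag `P = false`. -/
def run {X : Type*} [DecidableEq X] (a : ℕ → ℕ → X) : ℕ → IState X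
  | 0 => ⟨1, fun _ => 0, none⟩
  | n + 1 => (step a (run a n) (n + 1)).1

/-- `block a l` is the block `B_l` (of length `2^l`) produced by the algorithm. -/
def block {X : Type*} [DecidableEq X] (a : ℕ → ℕ → X) (l : ℕ) : List X :=
  (step a (run a (l - 1)) l).2

/-- the output sequence of the sequence interleaving algorithm (1-indexed): the
concatenation `B_1 + B_2 + ⋯`, so position `n` lies in block `l = log₂ (n+1)`,
which occupies positions `2^l − 1` through `2^(l+1) − 2`. -/
def output {X : Type*} [DecidableEq X] (a : ℕ → ℕ → X) (n : ℕ) : X :=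
  (block a (Nat.log2 (n + 1))).getD (n + 1 - 2 ^ Nat.log2 (n + 1)) (a 1 1)

/-- a sequence (with relevant indices `≥ 1`) is eventually periodic -/
def EvPeriodic {X : Type*} (b : ℕ → X) : Prop :=
  ∃ m, 1 ≤ m ∧ ∃ r, ∀ n > r, b (n + m) = b n

section Aux

variable {X : Type*} [DecidableEq X]

private theorem step_spec (a : ℕ → ℕ → X) (s : IState X) (m : ℕ) (T : List X) (ph' : ℕ)
    (hf : (step a s m).1.flag = some (T, ph')) :
    (s.flag = none ∧ ∃ p, listPeriod? (step a s m).2 = some p ∧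
        T = (step a s m).2.take p ∧ ph' = 2 ^ m % p)
    ∨ (∃ ph, s.flag = some (T, ph) ∧ ph' = (ph + 2 ^ m) % T.length ∧
        (step a s m).2 = patternBlock T (a 1 1) ph (2 ^ m)) := by
  rcases h : s.flag with _ | ⟨S0, ph0⟩
  · left
    refine ⟨rfl, ?_⟩
    simp only [step, h] at hf ⊢
    rcases hp : listPeriod? ((List.range (2 ^ m)).map fun j =>
        a (idx s.k) (s.used (idx s.k) + 1 + j)) with _ | p
    · rw [hp] at hf; simp at hf
    · rw [hp] at hf ⊢
      simp only at hf ⊢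
      cases hf
      exact ⟨p, rfl, rfl, rfl⟩
  · right
    simp only [step, h] at hf ⊢
    split at hf
    case isTrue hB =>
      simp only at hf
      cases hf
      rw [if_pos hB]
      exact ⟨ph0, rfl, rfl, hB⟩
    case isFalse => simp at hf

private theorem run_succ (a : ℕ → ℕ → X) (m : ℕ) :
    run a (m + 1) = (step a (run a m) (m + 1)).1 := rfl

private theorem block_succ (a : ℕ → ℕ → X) (m : ℕ) :
    block a (m + 1) = (step a (run a m) (m + 1)).2 := rfl

private theorem step_snd_length (a : ℕ → ℕ → X) (s : IState X) (m : ℕ) :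
    (step a s m).2.length = 2 ^ m := by
  rcases h : s.flag with _ | ⟨S0, ph0⟩ <;> simp only [step, h]
  · rcases hp : listPeriod? ((List.range (2 ^ m)).map fun j =>
        a (idx s.k) (s.used (idx s.k) + 1 + j)) with _ | p <;> simp
  · split <;> simp

private theorem listPeriod?_spec {L : List X} {p : ℕ} (h : listPeriod? L = some p) :
    0 < p ∧ p < L.length ∧ L.drop p = L.take (L.length - p) := by
  unfold listPeriod? at h
  have hmem := List.mem_of_find?_eq_some h
  have hpred := List.find?_some h
  simp only [List.mem_range] at hmem
  simp only [Bool.and_eq_true, decide_eq_true_eq, beq_iff_eq] at hpred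
  exact ⟨hpred.1, hmem, hpred.2⟩

private theorem periodic_getD {L : List X} {p : ℕ} (hp : 0 < p) (hpl : p ≤ L.length)
    (hper : L.drop p = L.take (L.length - p)) (d : X) :
    ∀ j, j < L.length → L.getD j d = L.getD (j % p) d := by
  intro j
  induction j using Nat.strong_induction_on with
  | _ j ih =>
    intro hj
    by_cases hjp : j < p
    · rw [Nat.mod_eq_of_lt hjp]
    · push_neg at hjp
      have h1 : L[j]? = L[j - p]? := by
        have h0 : L[j]? = (L.drop p)[j - p]? := by
          rw [List.getElem?_drop]; congr 1; omega
        rw [h0, hper, List.getElem?_take, if_pos (by omega)]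
      have h2 := ih (j - p) (by omega) (by omega)
      rw [List.getD_eq_getElem?_getD, h1, ← List.getD_eq_getElem?_getD, h2,
        Nat.mod_eq_sub_mod hjp]

private theorem patternBlock_getD (S : List X) (d : X) (ph n j : ℕ) (hj : j < n) :
    (patternBlock S d ph n).getD j d = S.getD ((ph + j) % S.length) d := by
  rw [patternBlock, List.getD_eq_getElem?_getD, List.getElem?_map, List.getElem?_range hj]
  rfl

private theorem take_getD (L : List X) (p i : ℕ) (hi : i < p) (d : X) :
    (L.take p).getD i d = L.getD i d := by
  rw [List.getD_eq_getElem?_getD, List.getD_eq_getElem?_getD, List.getElem?_take, if_pos hi]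

private theorem flag_pos (a : ℕ → ℕ → X) :
    ∀ m {T : List X} {ph : ℕ}, (run a m).flag = some (T, ph) → 0 < T.length := by
  intro m
  induction m with
  | zero => intro T ph h; simp [run] at h
  | succ m ih =>
    intro T ph h
    rw [run_succ] at h
    rcases step_spec a (run a m) (m + 1) T ph h with ⟨-, p, hp, hT, -⟩ | ⟨ph0, hf0, -, -⟩
    · obtain ⟨hp0, hplt, -⟩ := listPeriod?_spec hp
      subst hT
      simp only [List.length_take]
      omega
    · exact ih hf0

private theorem good (a : ℕ → ℕ → X) (l : ℕ) (hl : 1 ≤ l) (S : List X)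
    (hS : ∀ l', l ≤ l' → ∃ ph, (run a l').flag = some (S, ph)) :
    ∃ ψ, ∀ m, l ≤ m → ∃ e, e + 2 ^ l = 2 ^ m ∧
      (run a m).flag = some (S, (ψ + e + 2 ^ m) % S.length) ∧
      ∀ j, j < 2 ^ m → (block a m).getD j (a 1 1) = S.getD ((ψ + e + j) % S.length) (a 1 1) := by
  obtain ⟨l1, rfl⟩ : ∃ l1, l = l1 + 1 := ⟨l - 1, by omega⟩
  set l := l1 + 1 with hldef
  -- base case data
  obtain ⟨ph, hph⟩ := hS l le_rfl
  rw [run_succ] at hph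
  have hbase : ∃ ψ, (run a l).flag = some (S, (ψ + 0 + 2 ^ l) % S.length) ∧
      ∀ j, j < 2 ^ l → (block a l).getD j (a 1 1) = S.getD ((ψ + 0 + j) % S.length) (a 1 1) := by
    rcases step_spec a (run a l1) l S ph hph with ⟨-, p, hp, hT, hph'⟩ | ⟨ph0, hf0, hph', hB⟩
    · obtain ⟨hp0, hplt, hper⟩ := listPeriod?_spec hp
      have hlen : (step a (run a l1) l).2.length = 2 ^ l := step_snd_length a (run a l1) l
      have hSlen : S.length = p := by rw [hT, List.length_take]; omega
      refine ⟨0, ?_, ?_⟩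
      · rw [run_succ, hph, hph', hSlen]; norm_num
      · intro j hj
        rw [block_succ]
        have hper' := periodic_getD hp0 (by omega) hper (a 1 1) j (by omega)
        have hjp : j % p < p := Nat.mod_lt _ hp0
        rw [hper', Nat.zero_add, hSlen, hT, take_getD _ _ _ hjp]
    · refine ⟨ph0, ?_, ?_⟩
      · rw [run_succ, hph, hph']; norm_num
      · intro j hj
        rw [block_succ, hB, patternBlock_getD _ _ _ _ _ hj]
        have harg : ph0 + 0 + j = ph0 + j := by omega
        rw [harg]
  obtain ⟨ψ, hf, hb⟩ := hbase
  refine ⟨ψ, ?_⟩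
  intro m hm
  induction m, hm using Nat.le_induction with
  | base => exact ⟨0, by norm_num, hf, hb⟩
  | succ m hm ih =>
    obtain ⟨e, he, hflag, hblock⟩ := ih
    obtain ⟨ph', hph'⟩ := hS (m + 1) (by omega)
    rw [run_succ] at hph'
    rcases step_spec a (run a m) (m + 1) S ph' hph' with ⟨hnone, -⟩ | ⟨ph0, hf0, hpheq, hB⟩
    · rw [hflag] at hnone; exact absurd hnone (by simp)
    · rw [hflag] at hf0
      have hph0 : ph0 = (ψ + e + 2 ^ m) % S.length := by
        injection hf0 with hf0'; injection hf0' with h1 h2; exact h2.symm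
      have hpow : 2 ^ (m + 1) = 2 ^ m + 2 ^ m := by rw [pow_succ]; omega
      refine ⟨e + 2 ^ m, by omega, ?_, ?_⟩
      · have harg : ψ + e + 2 ^ m + 2 ^ (m + 1) = ψ + (e + 2 ^ m) + 2 ^ (m + 1) := by omega
        rw [run_succ, hph', hpheq, hph0, Nat.mod_add_mod, harg]
      · intro j hj
        have harg : ψ + e + 2 ^ m + j = ψ + (e + 2 ^ m) + j := by omega
        rw [block_succ, hB, patternBlock_getD _ _ _ _ _ hj, hph0, Nat.mod_add_mod, harg]

end Aux

/-- If at stage `l` the flag `P` is true with finite-fundamental string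
`S` and remains true with the same string at all subsequent stages, then the tail of
the output sequence from block `B_l` onward (positions `≥ 2^l − 1`) is periodic with
period `|S|`, and the output sequence is eventually periodic. -/
theorem stmt13 {X : Type*} [DecidableEq X] (a : ℕ → ℕ → X) (l : ℕ) (hl : 1 ≤ l)
    (S : List X) (hS : ∀ l', l ≤ l' → ∃ ph, (run a l').flag = some (S, ph)) :
    (∀ n, 2 ^ l - 1 ≤ n → output a (n + S.length) = output a n) ∧
      EvPeriodic (output a) := by
  obtain ⟨ph, hphl⟩ := hS l le_rfl
  have hpos : 0 < S.length := flag_pos a l hphl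
  have hp2 : 1 ≤ 2 ^ l := Nat.one_le_two_pow
  obtain ⟨ψ, hgood⟩ := good a l hl S hS
  -- the output formula
  have hout : ∀ n, 2 ^ l - 1 ≤ n →
      output a n = S.getD ((ψ + (n + 1 - 2 ^ l)) % S.length) (a 1 1) := by
    intro n hn
    have hn1 : n + 1 ≠ 0 := by omega
    have hml : l ≤ Nat.log2 (n + 1) := (Nat.le_log2 hn1).mpr (by omega)
    set m := Nat.log2 (n + 1) with hmdef
    have hlow : 2 ^ m ≤ n + 1 := Nat.log2_self_le hn1
    have hhigh : n + 1 < 2 ^ (m + 1) := Nat.lt_log2_self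
    have hpow : 2 ^ (m + 1) = 2 ^ m + 2 ^ m := by rw [pow_succ]; omega
    obtain ⟨e, he, -, hblock⟩ := hgood m hml
    have hj : n + 1 - 2 ^ m < 2 ^ m := by omega
    rw [output, ← hmdef, hblock _ hj]
    congr 2
    omega
  constructor
  · intro n hn
    rw [hout n hn, hout (n + S.length) (by omega)]
    have harg : ψ + (n + S.length + 1 - 2 ^ l) = ψ + (n + 1 - 2 ^ l) + S.length := by omega
    rw [harg, Nat.add_mod_right]
  · exact ⟨S.length, hpos, 2 ^ l, fun n hn => by
      have := hout n (by omega)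
      rw [hout (n + S.length) (by omega), hout n (by omega)]
      have harg : ψ + (n + S.length + 1 - 2 ^ l) = ψ + (n + 1 - 2 ^ l) + S.length := by omega
      rw [harg, Nat.add_mod_right]⟩
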